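/- Let Γ: ℝ × ℝ → ℝ³ be a smooth family such that for each t the curve Γ(·, t) is parametrized by centroaffine arclength, and suppose Γ_t = r₀Γ + r₁Γ' + r₂Γ'' with r₀ = −r₁' − (1/3)(r₂'' + 2p₁r₂), where r₀, r₁, r₂ are smooth functions of (x, t). Then the Wilczynski invariants evolve by: (p₀)_t = −r₁'''' + p₁r₁'' + 3p₀r₁' + p₀'r₁ − (1/3)(r₂''''' + p₁r₂''') + ((3p₀ − 2p₁')r₂')' + (2/3)(p₁²r₂' + (p₁p₁' − p₁''')r₂) + p₀''r₂, and (p₁)_t = −2r₁''' + 2p₁r₁' + p₁'r₁ − r₂'''' + p₁r₂'' + (3p₀ − p₁')r₂' + (2p₀' − p₁'')r₂. -/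

import Mathlib

/-- `det3 u v w` is the determinant of the 3×3 matrix with columns (equivalently, rows)
`u`, `v`, `w` in `ℝ³`. -/
noncomputable def det3 (u v w : Fin 3 → ℝ) : ℝ := Matrix.det (Matrix.of ![u, v, w])

/-- Partial derivative in the first (space) variable. -/
noncomputable def pdx {E : Type*} [NormedAddCommGroup E] [NormedSpace ℝ E]
    (f : ℝ → ℝ → E) : ℝ → ℝ → E := fun x t => deriv (fun x' => f x' t) x

/-- Partial derivative in the second (time) variable. -/
noncomputable def pdt {E : Type*} [NormedAddCommGroup E] [NormedSpace ℝ E]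
    (f : ℝ → ℝ → E) : ℝ → ℝ → E := fun x t => deriv (fun t' => f x t') t

lemma det3_expand (u v w : Fin 3 → ℝ) : det3 u v w =
    u 0 * v 1 * w 2 - u 0 * v 2 * w 1 - u 1 * v 0 * w 2 + u 1 * v 2 * w 0
      + u 2 * v 0 * w 1 - u 2 * v 1 * w 0 := by
  simp [det3, Matrix.det_fin_three]

section Calc
variable {E : Type*} [NormedAddCommGroup E] [NormedSpace ℝ E]

lemma hasDerivAt_pdx (f : ℝ → ℝ → E) (hf : ContDiff ℝ (⊤ : ℕ∞) (fun p : ℝ × ℝ => f p.1 p.2))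
    (x t : ℝ) : HasDerivAt (fun x' => f x' t) (pdx f x t) x := by
  have hL : HasDerivAt (fun x' : ℝ => (x', t)) ((1 : ℝ), (0 : ℝ)) x :=
    (hasDerivAt_id x).prodMk (hasDerivAt_const x t)
  have hF := ((hf.differentiable (by simp)) (x, t)).hasFDerivAt
  have h := hF.comp_hasDerivAt x hL
  have h2 : HasDerivAt (fun x' => f x' t)
      (fderiv ℝ (fun p : ℝ × ℝ => f p.1 p.2) (x, t) (1, 0)) x := h
  simpa [pdx] using h2.differentiableAt.hasDerivAt

lemma hasDerivAt_pdt (f : ℝ → ℝ → E) (hf : ContDiff ℝ (⊤ : ℕ∞) (fun p : ℝ × ℝ => f p.1 p.2))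
    (x t : ℝ) : HasDerivAt (fun t' => f x t') (pdt f x t) t := by
  have hL : HasDerivAt (fun t' : ℝ => (x, t')) ((0 : ℝ), (1 : ℝ)) t :=
    (hasDerivAt_const t x).prodMk (hasDerivAt_id t)
  have hF := ((hf.differentiable (by simp)) (x, t)).hasFDerivAt
  have h := hF.comp_hasDerivAt t hL
  have h2 : HasDerivAt (fun t' => f x t')
      (fderiv ℝ (fun p : ℝ × ℝ => f p.1 p.2) (x, t) (0, 1)) t := h
  simpa [pdt] using h2.differentiableAt.hasDerivAt

lemma pdx_eq_fderiv (f : ℝ → ℝ → E) (hf : ContDiff ℝ (⊤ : ℕ∞) (fun p : ℝ × ℝ => f p.1 p.2))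
    (x t : ℝ) : pdx f x t = fderiv ℝ (fun p : ℝ × ℝ => f p.1 p.2) (x, t) (1, 0) := by
  have hL : HasDerivAt (fun x' : ℝ => (x', t)) ((1 : ℝ), (0 : ℝ)) x :=
    (hasDerivAt_id x).prodMk (hasDerivAt_const x t)
  have hF := ((hf.differentiable (by simp)) (x, t)).hasFDerivAt
  have h : HasDerivAt (fun x' => f x' t)
      (fderiv ℝ (fun p : ℝ × ℝ => f p.1 p.2) (x, t) (1, 0)) x := by
    have h := hF.comp_hasDerivAt x hL
    exact h
  simpa [pdx] using h.deriv

lemma pdt_eq_fderiv (f : ℝ → ℝ → E) (hf : ContDiff ℝ (⊤ : ℕ∞) (fun p : ℝ × ℝ => f p.1 p.2))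
    (x t : ℝ) : pdt f x t = fderiv ℝ (fun p : ℝ × ℝ => f p.1 p.2) (x, t) (0, 1) := by
  have hL : HasDerivAt (fun t' : ℝ => (x, t')) ((0 : ℝ), (1 : ℝ)) t :=
    (hasDerivAt_const t x).prodMk (hasDerivAt_id t)
  have hF := ((hf.differentiable (by simp)) (x, t)).hasFDerivAt
  have h : HasDerivAt (fun t' => f x t')
      (fderiv ℝ (fun p : ℝ × ℝ => f p.1 p.2) (x, t) (0, 1)) t := hF.comp_hasDerivAt t hL
  simpa [pdt] using h.deriv

lemma contDiff_pdx (f : ℝ → ℝ → E) (hf : ContDiff ℝ (⊤ : ℕ∞) (fun p : ℝ × ℝ => f p.1 p.2)) :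
    ContDiff ℝ (⊤ : ℕ∞) (fun p : ℝ × ℝ => pdx f p.1 p.2) := by
  have : (fun p : ℝ × ℝ => pdx f p.1 p.2)
      = fun p : ℝ × ℝ => fderiv ℝ (fun q : ℝ × ℝ => f q.1 q.2) p (1, 0) := by
    funext p; exact pdx_eq_fderiv f hf p.1 p.2
  rw [this]
  exact (hf.fderiv_right (by simp)).clm_apply contDiff_const

lemma contDiff_pdt (f : ℝ → ℝ → E) (hf : ContDiff ℝ (⊤ : ℕ∞) (fun p : ℝ × ℝ => f p.1 p.2)) :
    ContDiff ℝ (⊤ : ℕ∞) (fun p : ℝ × ℝ => pdt f p.1 p.2) := by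
  have : (fun p : ℝ × ℝ => pdt f p.1 p.2)
      = fun p : ℝ × ℝ => fderiv ℝ (fun q : ℝ × ℝ => f q.1 q.2) p (0, 1) := by
    funext p; exact pdt_eq_fderiv f hf p.1 p.2
  rw [this]
  exact (hf.fderiv_right (by simp)).clm_apply contDiff_const

lemma pdt_pdx_eq (f : ℝ → ℝ → E) (hf : ContDiff ℝ (⊤ : ℕ∞) (fun p : ℝ × ℝ => f p.1 p.2)) :
    pdt (pdx f) = pdx (pdt f) := by
  funext x t
  set F := fun p : ℝ × ℝ => f p.1 p.2 with hFdef
  have hdF : Differentiable ℝ (fderiv ℝ F) :=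
    (hf.fderiv_right (by simp : ((⊤ : ℕ∞) : WithTop ℕ∞) + 1 ≤ ((⊤ : ℕ∞) : WithTop ℕ∞))).differentiable (by simp)
  have e1 : (fun p : ℝ × ℝ => pdx f p.1 p.2)
      = fun p : ℝ × ℝ => fderiv ℝ F p (1, 0) := by
    funext p; exact pdx_eq_fderiv f hf p.1 p.2
  have e2 : (fun p : ℝ × ℝ => pdt f p.1 p.2)
      = fun p : ℝ × ℝ => fderiv ℝ F p (0, 1) := by
    funext p; exact pdt_eq_fderiv f hf p.1 p.2
  have h1 : pdt (pdx f) x t = fderiv ℝ (fun p : ℝ × ℝ => pdx f p.1 p.2) (x, t) (0, 1) :=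
    pdt_eq_fderiv (pdx f) (contDiff_pdx f hf) x t
  have h2 : pdx (pdt f) x t = fderiv ℝ (fun p : ℝ × ℝ => pdt f p.1 p.2) (x, t) (1, 0) :=
    pdx_eq_fderiv (pdt f) (contDiff_pdt f hf) x t
  rw [h1, h2, e1, e2]
  have d1 : fderiv ℝ (fun p : ℝ × ℝ => fderiv ℝ F p (1, 0)) (x, t)
      = (fderiv ℝ (fderiv ℝ F) (x, t)).flip (1, 0) := by
    have := fderiv_clm_apply (hdF (x, t)) (differentiableAt_const ((1 : ℝ), (0 : ℝ)))
    simpa using this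
  have d2 : fderiv ℝ (fun p : ℝ × ℝ => fderiv ℝ F p (0, 1)) (x, t)
      = (fderiv ℝ (fderiv ℝ F) (x, t)).flip (0, 1) := by
    have := fderiv_clm_apply (hdF (x, t)) (differentiableAt_const ((0 : ℝ), (1 : ℝ)))
    simpa using this
  rw [d1, d2]
  exact (hf.contDiffAt.isSymmSndFDerivAt (by simp; exact WithTop.coe_le_coe.mpr (le_top : (2 : ℕ∞) ≤ ⊤))).eq _ _
end Calc

lemma eq_zero_of_det3 {u v w z : Fin 3 → ℝ} (h : det3 u v w ≠ 0)
    (h1 : det3 z v w = 0) (h2 : det3 u z w = 0) (h3 : det3 u v z = 0) : z = 0 := by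
  have key : ∀ j : Fin 3, j = 0 ∨ j = 1 ∨ j = 2 →
      det3 u v w * z j = u j * det3 z v w + v j * det3 u z w + w j * det3 u v z := by
    rintro j (rfl | rfl | rfl) <;> · simp only [det3_expand]; ring
  have hz : ∀ j : Fin 3, j = 0 ∨ j = 1 ∨ j = 2 → z j = 0 := by
    intro j hj
    have h0 : det3 u v w * z j = 0 := by rw [key j hj, h1, h2, h3]; ring
    exact (mul_eq_zero.mp h0).resolve_left h
  funext j
  fin_cases j
  · exact hz 0 (by norm_num)
  · exact hz 1 (by norm_num)
  · exact hz 2 (by norm_num)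

lemma hasDerivAt_det3 {u v w : ℝ → Fin 3 → ℝ} {u' v' w' : Fin 3 → ℝ} {x : ℝ}
    (hu : HasDerivAt u u' x) (hv : HasDerivAt v v' x) (hw : HasDerivAt w w' x) :
    HasDerivAt (fun s => det3 (u s) (v s) (w s))
      (det3 u' (v x) (w x) + det3 (u x) v' (w x) + det3 (u x) (v x) w') x := by
  have comp : ∀ (f : ℝ → Fin 3 → ℝ) (f' : Fin 3 → ℝ), HasDerivAt f f' x →
      ∀ i, HasDerivAt (fun s => f s i) (f' i) x := by
    intro f f' hf i
    exact (ContinuousLinearMap.proj (R := ℝ) (φ := fun _ : Fin 3 => ℝ) i).hasFDerivAt.comp_hasDerivAt x hf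
  have hu0 := comp u u' hu 0; have hu1 := comp u u' hu 1; have hu2 := comp u u' hu 2
  have hv0 := comp v v' hv 0; have hv1 := comp v v' hv 1; have hv2 := comp v v' hv 2
  have hw0 := comp w w' hw 0; have hw1 := comp w w' hw 1; have hw2 := comp w w' hw 2
  have hfun : (fun s => det3 (u s) (v s) (w s))
      = fun s => u s 0 * v s 1 * w s 2 - u s 0 * v s 2 * w s 1 - u s 1 * v s 0 * w s 2
          + u s 1 * v s 2 * w s 0 + u s 2 * v s 0 * w s 1 - u s 2 * v s 1 * w s 0 :=
    funext fun s => det3_expand _ _ _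
  rw [hfun]
  have h := (((((((hu0.mul hv1).mul hw2).sub ((hu0.mul hv2).mul hw1)).sub
      ((hu1.mul hv0).mul hw2)).add ((hu1.mul hv2).mul hw0)).add
      ((hu2.mul hv0).mul hw1)).sub ((hu2.mul hv1).mul hw0))
  refine h.congr_deriv ?_
  simp only [det3_expand, Pi.mul_apply]
  ring

lemma contDiff_det3 {u v w : ℝ → ℝ → Fin 3 → ℝ}
    (hu : ContDiff ℝ (⊤ : ℕ∞) (fun p : ℝ × ℝ => u p.1 p.2))
    (hv : ContDiff ℝ (⊤ : ℕ∞) (fun p : ℝ × ℝ => v p.1 p.2))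
    (hw : ContDiff ℝ (⊤ : ℕ∞) (fun p : ℝ × ℝ => w p.1 p.2)) :
    ContDiff ℝ (⊤ : ℕ∞) (fun p : ℝ × ℝ => det3 (u p.1 p.2) (v p.1 p.2) (w p.1 p.2)) := by
  have c : ∀ (f : ℝ → ℝ → Fin 3 → ℝ), ContDiff ℝ (⊤ : ℕ∞) (fun p : ℝ × ℝ => f p.1 p.2) →
      ∀ i : Fin 3, ContDiff ℝ (⊤ : ℕ∞) (fun p : ℝ × ℝ => f p.1 p.2 i) := by
    intro f hf i
    exact (ContinuousLinearMap.proj (R := ℝ) (φ := fun _ : Fin 3 => ℝ) i).contDiff.comp hf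
  simp only [det3_expand]
  exact (((((((c u hu 0).mul (c v hv 1)).mul (c w hw 2)).sub
      (((c u hu 0).mul (c v hv 2)).mul (c w hw 1))).sub
      (((c u hu 1).mul (c v hv 0)).mul (c w hw 2))).add
      (((c u hu 1).mul (c v hv 2)).mul (c w hw 0))).add
      (((c u hu 2).mul (c v hv 0)).mul (c w hw 1))).sub
      (((c u hu 2).mul (c v hv 1)).mul (c w hw 0))

/-- Under a general non-stretching centroaffine curve flow
`Γ_t = r₀Γ + r₁Γ' + r₂Γ''` with `r₀ = −r₁' − (1/3)(r₂'' + 2p₁r₂)`,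
the Wilczynski invariants `p₀`, `p₁` evolve by the stated equations. -/
theorem wilczynski_evolution
    (Γ : ℝ → ℝ → Fin 3 → ℝ)
    (hΓ : ContDiff ℝ (⊤ : ℕ∞) (fun p : ℝ × ℝ => Γ p.1 p.2))
    (harc : ∀ x t, det3 (Γ x t) (pdx Γ x t) (pdx (pdx Γ) x t) = 1)
    (p₀ p₁ : ℝ → ℝ → ℝ)
    (hp₀ : ∀ x t, p₀ x t = det3 (pdx (pdx (pdx Γ)) x t) (pdx Γ x t) (pdx (pdx Γ) x t))
    (hp₁ : ∀ x t, p₁ x t = det3 (Γ x t) (pdx (pdx (pdx Γ)) x t) (pdx (pdx Γ) x t))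
    (r₀ r₁ r₂ : ℝ → ℝ → ℝ)
    (hr₁ : ContDiff ℝ (⊤ : ℕ∞) (fun p : ℝ × ℝ => r₁ p.1 p.2))
    (hr₂ : ContDiff ℝ (⊤ : ℕ∞) (fun p : ℝ × ℝ => r₂ p.1 p.2))
    (hr₀ : ∀ x t, r₀ x t = -pdx r₁ x t - (1/3) * (pdx (pdx r₂) x t + 2 * p₁ x t * r₂ x t))
    (hflow : ∀ x t, pdt Γ x t
        = r₀ x t • Γ x t + r₁ x t • pdx Γ x t + r₂ x t • pdx (pdx Γ) x t) :
    (∀ x t, pdt p₀ x t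
        = -pdx (pdx (pdx (pdx r₁))) x t + p₁ x t * pdx (pdx r₁) x t
          + 3 * p₀ x t * pdx r₁ x t + pdx p₀ x t * r₁ x t
          - (1/3) * (pdx (pdx (pdx (pdx (pdx r₂)))) x t + p₁ x t * pdx (pdx (pdx r₂)) x t)
          + pdx (fun x t => (3 * p₀ x t - 2 * pdx p₁ x t) * pdx r₂ x t) x t
          + (2/3) * ((p₁ x t)^2 * pdx r₂ x t
              + (p₁ x t * pdx p₁ x t - pdx (pdx (pdx p₁)) x t) * r₂ x t)
          + pdx (pdx p₀) x t * r₂ x t) ∧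
    (∀ x t, pdt p₁ x t
        = -2 * pdx (pdx (pdx r₁)) x t + 2 * p₁ x t * pdx r₁ x t + pdx p₁ x t * r₁ x t
          - pdx (pdx (pdx (pdx r₂))) x t + p₁ x t * pdx (pdx r₂) x t
          + (3 * p₀ x t - pdx p₁ x t) * pdx r₂ x t
          + (2 * pdx p₀ x t - pdx (pdx p₁) x t) * r₂ x t) := by
  have sG0 : ContDiff ℝ (⊤ : ℕ∞) (fun p : ℝ × ℝ => Γ p.1 p.2) := hΓ
  have sG1 : ContDiff ℝ (⊤ : ℕ∞) (fun p : ℝ × ℝ => (pdx Γ) p.1 p.2) := contDiff_pdx Γ hΓ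
  have sG2 : ContDiff ℝ (⊤ : ℕ∞) (fun p : ℝ × ℝ => (pdx (pdx Γ)) p.1 p.2) := contDiff_pdx (pdx Γ) sG1
  have sG3 : ContDiff ℝ (⊤ : ℕ∞) (fun p : ℝ × ℝ => (pdx (pdx (pdx Γ))) p.1 p.2) := contDiff_pdx (pdx (pdx Γ)) sG2
  have sG4 : ContDiff ℝ (⊤ : ℕ∞) (fun p : ℝ × ℝ => (pdx (pdx (pdx (pdx Γ)))) p.1 p.2) := contDiff_pdx (pdx (pdx (pdx Γ))) sG3
  have sr1_1 : ContDiff ℝ (⊤ : ℕ∞) (fun p : ℝ × ℝ => (pdx r₁) p.1 p.2) := contDiff_pdx r₁ hr₁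
  have sr1_2 : ContDiff ℝ (⊤ : ℕ∞) (fun p : ℝ × ℝ => (pdx (pdx r₁)) p.1 p.2) := contDiff_pdx (pdx r₁) sr1_1
  have sr1_3 : ContDiff ℝ (⊤ : ℕ∞) (fun p : ℝ × ℝ => (pdx (pdx (pdx r₁))) p.1 p.2) := contDiff_pdx (pdx (pdx r₁)) sr1_2
  have sr2_1 : ContDiff ℝ (⊤ : ℕ∞) (fun p : ℝ × ℝ => (pdx r₂) p.1 p.2) := contDiff_pdx r₂ hr₂
  have sr2_2 : ContDiff ℝ (⊤ : ℕ∞) (fun p : ℝ × ℝ => (pdx (pdx r₂)) p.1 p.2) := contDiff_pdx (pdx r₂) sr2_1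
  have sr2_3 : ContDiff ℝ (⊤ : ℕ∞) (fun p : ℝ × ℝ => (pdx (pdx (pdx r₂))) p.1 p.2) := contDiff_pdx (pdx (pdx r₂)) sr2_2
  have sr2_4 : ContDiff ℝ (⊤ : ℕ∞) (fun p : ℝ × ℝ => (pdx (pdx (pdx (pdx r₂)))) p.1 p.2) := contDiff_pdx (pdx (pdx (pdx r₂))) sr2_3
  have sp0_0 : ContDiff ℝ (⊤ : ℕ∞) (fun p : ℝ × ℝ => p₀ p.1 p.2) := by
    rw [show p₀ = fun x t => det3 (pdx (pdx (pdx Γ)) x t) (pdx Γ x t) (pdx (pdx Γ) x t) from funext fun x => funext fun t => hp₀ x t]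
    exact contDiff_det3 sG3 sG1 sG2
  have sp1_0 : ContDiff ℝ (⊤ : ℕ∞) (fun p : ℝ × ℝ => p₁ p.1 p.2) := by
    rw [show p₁ = fun x t => det3 (Γ x t) (pdx (pdx (pdx Γ)) x t) (pdx (pdx Γ) x t) from funext fun x => funext fun t => hp₁ x t]
    exact contDiff_det3 sG0 sG3 sG2
  have sp0_1 : ContDiff ℝ (⊤ : ℕ∞) (fun p : ℝ × ℝ => (pdx p₀) p.1 p.2) := contDiff_pdx p₀ sp0_0
  have sp0_2 : ContDiff ℝ (⊤ : ℕ∞) (fun p : ℝ × ℝ => (pdx (pdx p₀)) p.1 p.2) := contDiff_pdx (pdx p₀) sp0_1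
  have sp1_1 : ContDiff ℝ (⊤ : ℕ∞) (fun p : ℝ × ℝ => (pdx p₁) p.1 p.2) := contDiff_pdx p₁ sp1_0
  have sp1_2 : ContDiff ℝ (⊤ : ℕ∞) (fun p : ℝ × ℝ => (pdx (pdx p₁)) p.1 p.2) := contDiff_pdx (pdx p₁) sp1_1
  have sr0_0 : ContDiff ℝ (⊤ : ℕ∞) (fun p : ℝ × ℝ => r₀ p.1 p.2) := by
    rw [show r₀ = fun x t => -pdx r₁ x t - (1/3) * (pdx (pdx r₂) x t + 2 * p₁ x t * r₂ x t) from funext fun x => funext fun t => hr₀ x t]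
    exact (contDiff_pdx r₁ hr₁).neg.sub (contDiff_const.mul ((contDiff_pdx (pdx r₂) (contDiff_pdx r₂ hr₂)).add ((contDiff_const.mul sp1_0).mul hr₂)))
  have sr0_1 : ContDiff ℝ (⊤ : ℕ∞) (fun p : ℝ × ℝ => (pdx r₀) p.1 p.2) := contDiff_pdx r₀ sr0_0
  have sr0_2 : ContDiff ℝ (⊤ : ℕ∞) (fun p : ℝ × ℝ => (pdx (pdx r₀)) p.1 p.2) := contDiff_pdx (pdx r₀) sr0_1
  have hr0d1 : ∀ x t, (pdx r₀) x t = ((-(pdx (pdx r₁)) x t) - ((1/3) * ((pdx (pdx (pdx r₂))) x t + ((((2) * (pdx p₁) x t) * r₂ x t) + (((2) * p₁ x t) * (pdx r₂) x t))))) := by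
    intro x t
    have hfun : (fun x' => r₀ x' t) = fun x' => ((-(pdx r₁) x' t) - ((1/3) * ((pdx (pdx r₂)) x' t + (((2) * p₁ x' t) * r₂ x' t)))) := funext fun x' => hr₀ x' t
    have hd : HasDerivAt (fun x' => r₀ x' t) (((-(pdx (pdx r₁)) x t) - ((1/3) * ((pdx (pdx (pdx r₂))) x t + ((((2) * (pdx p₁) x t) * r₂ x t) + (((2) * p₁ x t) * (pdx r₂) x t)))))) x := by
      rw [hfun]
      exact (((hasDerivAt_pdx (pdx r₁) sr1_1 x t).neg).sub (((hasDerivAt_pdx (pdx (pdx r₂)) sr2_2 x t).add (((hasDerivAt_pdx p₁ sp1_0 x t).const_mul (2)).mul (hasDerivAt_pdx r₂ hr₂ x t))).const_mul (1/3)))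
    exact hd.deriv
  have hr0d2 : ∀ x t, (pdx (pdx r₀)) x t = ((-(pdx (pdx (pdx r₁))) x t) - ((1/3) * ((pdx (pdx (pdx (pdx r₂)))) x t + (((((2) * (pdx (pdx p₁)) x t) * r₂ x t) + (((2) * (pdx p₁) x t) * (pdx r₂) x t)) + ((((2) * (pdx p₁) x t) * (pdx r₂) x t) + (((2) * p₁ x t) * (pdx (pdx r₂)) x t)))))) := by
    intro x t
    have hfun : (fun x' => (pdx r₀) x' t) = fun x' => ((-(pdx (pdx r₁)) x' t) - ((1/3) * ((pdx (pdx (pdx r₂))) x' t + ((((2) * (pdx p₁) x' t) * r₂ x' t) + (((2) * p₁ x' t) * (pdx r₂) x' t))))) := funext fun x' => hr0d1 x' t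
    have hd : HasDerivAt (fun x' => (pdx r₀) x' t) (((-(pdx (pdx (pdx r₁))) x t) - ((1/3) * ((pdx (pdx (pdx (pdx r₂)))) x t + (((((2) * (pdx (pdx p₁)) x t) * r₂ x t) + (((2) * (pdx p₁) x t) * (pdx r₂) x t)) + ((((2) * (pdx p₁) x t) * (pdx r₂) x t) + (((2) * p₁ x t) * (pdx (pdx r₂)) x t))))))) x := by
      rw [hfun]
      exact (((hasDerivAt_pdx (pdx (pdx r₁)) sr1_2 x t).neg).sub (((hasDerivAt_pdx (pdx (pdx (pdx r₂))) sr2_3 x t).add ((((hasDerivAt_pdx (pdx p₁) sp1_1 x t).const_mul (2)).mul (hasDerivAt_pdx r₂ hr₂ x t)).add (((hasDerivAt_pdx p₁ sp1_0 x t).const_mul (2)).mul (hasDerivAt_pdx (pdx r₂) sr2_1 x t)))).const_mul (1/3)))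
    exact hd.deriv
  have hr0d3 : ∀ x t, (pdx (pdx (pdx r₀))) x t = ((-(pdx (pdx (pdx (pdx r₁)))) x t) - ((1/3) * ((pdx (pdx (pdx (pdx (pdx r₂))))) x t + ((((((2) * (pdx (pdx (pdx p₁))) x t) * r₂ x t) + (((2) * (pdx (pdx p₁)) x t) * (pdx r₂) x t)) + ((((2) * (pdx (pdx p₁)) x t) * (pdx r₂) x t) + (((2) * (pdx p₁) x t) * (pdx (pdx r₂)) x t))) + (((((2) * (pdx (pdx p₁)) x t) * (pdx r₂) x t) + (((2) * (pdx p₁) x t) * (pdx (pdx r₂)) x t)) + ((((2) * (pdx p₁) x t) * (pdx (pdx r₂)) x t) + (((2) * p₁ x t) * (pdx (pdx (pdx r₂))) x t))))))) := by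
    intro x t
    have hfun : (fun x' => (pdx (pdx r₀)) x' t) = fun x' => ((-(pdx (pdx (pdx r₁))) x' t) - ((1/3) * ((pdx (pdx (pdx (pdx r₂)))) x' t + (((((2) * (pdx (pdx p₁)) x' t) * r₂ x' t) + (((2) * (pdx p₁) x' t) * (pdx r₂) x' t)) + ((((2) * (pdx p₁) x' t) * (pdx r₂) x' t) + (((2) * p₁ x' t) * (pdx (pdx r₂)) x' t)))))) := funext fun x' => hr0d2 x' t
    have hd : HasDerivAt (fun x' => (pdx (pdx r₀)) x' t) (((-(pdx (pdx (pdx (pdx r₁)))) x t) - ((1/3) * ((pdx (pdx (pdx (pdx (pdx r₂))))) x t + ((((((2) * (pdx (pdx (pdx p₁))) x t) * r₂ x t) + (((2) * (pdx (pdx p₁)) x t) * (pdx r₂) x t)) + ((((2) * (pdx (pdx p₁)) x t) * (pdx r₂) x t) + (((2) * (pdx p₁) x t) * (pdx (pdx r₂)) x t))) + (((((2) * (pdx (pdx p₁)) x t) * (pdx r₂) x t) + (((2) * (pdx p₁) x t) * (pdx (pdx r₂)) x t)) + ((((2) * (pdx p₁) x t) * (pdx (pdx r₂)) x t) + (((2)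 * p₁ x t) * (pdx (pdx (pdx r₂))) x t)))))))) x := by
      rw [hfun]
      exact (((hasDerivAt_pdx (pdx (pdx (pdx r₁))) sr1_3 x t).neg).sub (((hasDerivAt_pdx (pdx (pdx (pdx (pdx r₂)))) sr2_4 x t).add (((((hasDerivAt_pdx (pdx (pdx p₁)) sp1_2 x t).const_mul (2)).mul (hasDerivAt_pdx r₂ hr₂ x t)).add (((hasDerivAt_pdx (pdx p₁) sp1_1 x t).const_mul (2)).mul (hasDerivAt_pdx (pdx r₂) sr2_1 x t))).add ((((hasDerivAt_pdx (pdx p₁) sp1_1 x t).const_mul (2)).mul (hasDerivAt_pdx (pdx r₂) sr2_1 x t)).add (((hasDerivAt_pdx p₁ sp1_0 x t).const_mul (2)).mul (hasDerivAt_pdx (pdx (pdx r₂)) sr2_2 x t))))).const_mul (1/3)))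
    exact hd.deriv
  have hS1 : pdt (pdx Γ) = pdx (pdt Γ) := pdt_pdx_eq Γ hΓ
  have hS2 : pdt (pdx (pdx Γ)) = pdx (pdx (pdt Γ)) := (pdt_pdx_eq (pdx Γ) sG1).trans (congrArg pdx hS1)
  have hS3 : pdt (pdx (pdx (pdx Γ))) = pdx (pdx (pdx (pdt Γ))) := (pdt_pdx_eq (pdx (pdx Γ)) sG2).trans (congrArg pdx hS2)
  have hH1 : ∀ x t, det3 (Γ x t) (pdx Γ x t) (pdx (pdx (pdx Γ)) x t) = 0 := by
    intro x t
    have hfun : (fun x' => det3 (Γ x' t) (pdx Γ x' t) (pdx (pdx Γ) x' t)) = fun _ => (1:ℝ) := funext fun x' => harc x' t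
    have hd : HasDerivAt (fun x' => det3 (Γ x' t) (pdx Γ x' t) (pdx (pdx Γ) x' t)) (det3 (pdx Γ x t) (pdx Γ x t) (pdx (pdx Γ) x t) + det3 (Γ x t) (pdx (pdx Γ) x t) (pdx (pdx Γ) x t) + det3 (Γ x t) (pdx Γ x t) (pdx (pdx (pdx Γ)) x t)) x :=
      hasDerivAt_det3 (hasDerivAt_pdx Γ hΓ x t) (hasDerivAt_pdx (pdx Γ) sG1 x t) (hasDerivAt_pdx (pdx (pdx Γ)) sG2 x t)
    have h0 : deriv (fun x' => det3 (Γ x' t) (pdx Γ x' t) (pdx (pdx Γ) x' t)) x = 0 := by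
      rw [hfun]; exact deriv_const x 1
    have h1 := hd.deriv
    rw [h0] at h1
    have hA : det3 (pdx Γ x t) (pdx Γ x t) (pdx (pdx Γ) x t) = 0 := by simp only [det3_expand]; ring
    have hB : det3 (Γ x t) (pdx (pdx Γ) x t) (pdx (pdx Γ) x t) = 0 := by simp only [det3_expand]; ring
    linarith [h1, hA, hB]
  have hF0 : ∀ x t, pdx (pdx (pdx Γ)) x t = p₀ x t • Γ x t + p₁ x t • pdx Γ x t := by
    intro x t
    have hDne : det3 (Γ x t) (pdx Γ x t) (pdx (pdx Γ) x t) ≠ 0 := by rw [harc x t]; norm_num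
    have e := harc x t; rw [det3_expand] at e
    have e0 := hp₀ x t; rw [det3_expand] at e0
    have e1 := hp₁ x t; rw [det3_expand] at e1
    have eH := hH1 x t; rw [det3_expand] at eH
    have h1 : det3 (pdx (pdx (pdx Γ)) x t - p₀ x t • Γ x t - p₁ x t • pdx Γ x t) (pdx Γ x t) (pdx (pdx Γ) x t) = 0 := by
      simp only [det3_expand, Pi.sub_apply, Pi.smul_apply, smul_eq_mul]
      linear_combination (-(p₀ x t)) * e - e0
    have h2 : det3 (Γ x t) (pdx (pdx (pdx Γ)) x t - p₀ x t • Γ x t - p₁ x t • pdx Γ x t) (pdx (pdx Γ) x t) = 0 := by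
      simp only [det3_expand, Pi.sub_apply, Pi.smul_apply, smul_eq_mul]
      linear_combination (-(p₁ x t)) * e - e1
    have h3 : det3 (Γ x t) (pdx Γ x t) (pdx (pdx (pdx Γ)) x t - p₀ x t • Γ x t - p₁ x t • pdx Γ x t) = 0 := by
      simp only [det3_expand, Pi.sub_apply, Pi.smul_apply, smul_eq_mul]
      linear_combination eH
    have hz := eq_zero_of_det3 hDne h1 h2 h3
    rwa [sub_sub, sub_eq_zero] at hz
  have hF1 : ∀ x t, (pdx (pdx (pdx (pdx Γ)))) x t = (((p₀ x t • (pdx Γ) x t) + ((pdx p₀) x t • Γ x t)) + ((p₁ x t • (pdx (pdx Γ)) x t) + ((pdx p₁) x t • (pdx Γ) x t))) := by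
    intro x t
    have hfun : (fun x' => (pdx (pdx (pdx Γ))) x' t) = fun x' => ((p₀ x' t • Γ x' t) + (p₁ x' t • (pdx Γ) x' t)) := funext fun x' => hF0 x' t
    have hd : HasDerivAt (fun x' => (pdx (pdx (pdx Γ))) x' t) ((((p₀ x t • (pdx Γ) x t) + ((pdx p₀) x t • Γ x t)) + ((p₁ x t • (pdx (pdx Γ)) x t) + ((pdx p₁) x t • (pdx Γ) x t)))) x := by
      rw [hfun]
      exact (((hasDerivAt_pdx p₀ sp0_0 x t).smul (hasDerivAt_pdx Γ hΓ x t)).add ((hasDerivAt_pdx p₁ sp1_0 x t).smul (hasDerivAt_pdx (pdx Γ) sG1 x t)))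
    exact hd.deriv
  have hF2 : ∀ x t, (pdx (pdx (pdx (pdx (pdx Γ))))) x t = ((((p₀ x t • (pdx (pdx Γ)) x t) + ((pdx p₀) x t • (pdx Γ) x t)) + (((pdx p₀) x t • (pdx Γ) x t) + ((pdx (pdx p₀)) x t • Γ x t))) + (((p₁ x t • (pdx (pdx (pdx Γ))) x t) + ((pdx p₁) x t • (pdx (pdx Γ)) x t)) + (((pdx p₁) x t • (pdx (pdx Γ)) x t) + ((pdx (pdx p₁)) x t • (pdx Γ) x t)))) := by
    intro x t
    have hfun : (fun x' => (pdx (pdx (pdx (pdx Γ)))) x' t) = fun x' => (((p₀ x' t • (pdx Γ) x' t) + ((pdx p₀) x' t • Γ x' t)) + ((p₁ x' t • (pdx (pdx Γ)) x' t) + ((pdx p₁) x' t • (pdx Γ) x' t))) := funext fun x' => hF1 x' t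
    have hd : HasDerivAt (fun x' => (pdx (pdx (pdx (pdx Γ)))) x' t) (((((p₀ x t • (pdx (pdx Γ)) x t) + ((pdx p₀) x t • (pdx Γ) x t)) + (((pdx p₀) x t • (pdx Γ) x t) + ((pdx (pdx p₀)) x t • Γ x t))) + (((p₁ x t • (pdx (pdx (pdx Γ))) x t) + ((pdx p₁) x t • (pdx (pdx Γ)) x t)) + (((pdx p₁) x t • (pdx (pdx Γ)) x t) + ((pdx (pdx p₁)) x t • (pdx Γ) x t))))) x := by
      rw [hfun]
      exact ((((hasDerivAt_pdx p₀ sp0_0 x t).smul (hasDerivAt_pdx (pdx Γ) sG1 x t)).add ((hasDerivAt_pdx (pdx p₀) sp0_1 x t).smul (hasDerivAt_pdx Γ hΓ x t))).add (((hasDerivAt_pdx p₁ sp1_0 x t).smul (hasDerivAt_pdx (pdx (pdx Γ)) sG2 x t)).add ((hasDerivAt_pdx (pdx p₁) sp1_1 x t).smul (hasDerivAt_pdx (pdx Γ) sG1 x t))))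
    exact hd.deriv
  have hX1 : ∀ x t, (pdx (pdt Γ)) x t = ((((r₀ x t • (pdx Γ) x t) + ((pdx r₀) x t • Γ x t)) + ((r₁ x t • (pdx (pdx Γ)) x t) + ((pdx r₁) x t • (pdx Γ) x t))) + ((r₂ x t • (pdx (pdx (pdx Γ))) x t) + ((pdx r₂) x t • (pdx (pdx Γ)) x t))) := by
    intro x t
    have hfun : (fun x' => (pdt Γ) x' t) = fun x' => (((r₀ x' t • Γ x' t) + (r₁ x' t • (pdx Γ) x' t)) + (r₂ x' t • (pdx (pdx Γ)) x' t)) := funext fun x' => hflow x' t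
    have hd : HasDerivAt (fun x' => (pdt Γ) x' t) (((((r₀ x t • (pdx Γ) x t) + ((pdx r₀) x t • Γ x t)) + ((r₁ x t • (pdx (pdx Γ)) x t) + ((pdx r₁) x t • (pdx Γ) x t))) + ((r₂ x t • (pdx (pdx (pdx Γ))) x t) + ((pdx r₂) x t • (pdx (pdx Γ)) x t)))) x := by
      rw [hfun]
      exact ((((hasDerivAt_pdx r₀ sr0_0 x t).smul (hasDerivAt_pdx Γ hΓ x t)).add ((hasDerivAt_pdx r₁ hr₁ x t).smul (hasDerivAt_pdx (pdx Γ) sG1 x t))).add ((hasDerivAt_pdx r₂ hr₂ x t).smul (hasDerivAt_pdx (pdx (pdx Γ)) sG2 x t)))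
    exact hd.deriv
  have hX2 : ∀ x t, (pdx (pdx (pdt Γ))) x t = (((((r₀ x t • (pdx (pdx Γ)) x t) + ((pdx r₀) x t • (pdx Γ) x t)) + (((pdx r₀) x t • (pdx Γ) x t) + ((pdx (pdx r₀)) x t • Γ x t))) + (((r₁ x t • (pdx (pdx (pdx Γ))) x t) + ((pdx r₁) x t • (pdx (pdx Γ)) x t)) + (((pdx r₁) x t • (pdx (pdx Γ)) x t) + ((pdx (pdx r₁)) x t • (pdx Γ) x t)))) + (((r₂ x t • (pdx (pdx (pdx (pdx Γ)))) x t) + ((pdx r₂) x t • (pdx (pdx (pdx Γ))) x t)) + (((pdx r₂) x t • (pdx (pdx (pdx Γ))) x t) + ((pdx (pdx r₂)) x t • (pdx (pdx Γ)) x t)))) := by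
    intro x t
    have hfun : (fun x' => (pdx (pdt Γ)) x' t) = fun x' => ((((r₀ x' t • (pdx Γ) x' t) + ((pdx r₀) x' t • Γ x' t)) + ((r₁ x' t • (pdx (pdx Γ)) x' t) + ((pdx r₁) x' t • (pdx Γ) x' t))) + ((r₂ x' t • (pdx (pdx (pdx Γ))) x' t) + ((pdx r₂) x' t • (pdx (pdx Γ)) x' t))) := funext fun x' => hX1 x' t
    have hd : HasDerivAt (fun x' => (pdx (pdt Γ)) x' t) ((((((r₀ x t • (pdx (pdx Γ)) x t) + ((pdx r₀) x t • (pdx Γ) x t)) + (((pdx r₀) x t • (pdx Γ) x t) + ((pdx (pdx r₀)) x t • Γ x t))) + (((r₁ x t • (pdx (pdx (pdx Γ))) x t) + ((pdx r₁) x t • (pdx (pdx Γ)) x t)) + (((pdx r₁) x t • (pdx (pdx Γ)) x t) + ((pdx (pdx r₁)) x t • (pdx Γ) x t)))) + (((r₂ x t • (pdx (pdx (pdx (pdx Γ)))) x t) + ((pdx r₂) x t • (pdx (pdx (pdx Γ))) x t)) + (((pdx r₂) x t • (pdx (pdx (pdx Γ))) x t) + ((pdx (pdx r₂)) x t • (pdx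 (pdx Γ)) x t))))) x := by
      rw [hfun]
      exact (((((hasDerivAt_pdx r₀ sr0_0 x t).smul (hasDerivAt_pdx (pdx Γ) sG1 x t)).add ((hasDerivAt_pdx (pdx r₀) sr0_1 x t).smul (hasDerivAt_pdx Γ hΓ x t))).add (((hasDerivAt_pdx r₁ hr₁ x t).smul (hasDerivAt_pdx (pdx (pdx Γ)) sG2 x t)).add ((hasDerivAt_pdx (pdx r₁) sr1_1 x t).smul (hasDerivAt_pdx (pdx Γ) sG1 x t)))).add (((hasDerivAt_pdx r₂ hr₂ x t).smul (hasDerivAt_pdx (pdx (pdx (pdx Γ))) sG3 x t)).add ((hasDerivAt_pdx (pdx r₂) sr2_1 x t).smul (hasDerivAt_pdx (pdx (pdx Γ)) sG2 x t))))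
    exact hd.deriv
  have hX3 : ∀ x t, (pdx (pdx (pdx (pdt Γ)))) x t = ((((((r₀ x t • (pdx (pdx (pdx Γ))) x t) + ((pdx r₀) x t • (pdx (pdx Γ)) x t)) + (((pdx r₀) x t • (pdx (pdx Γ)) x t) + ((pdx (pdx r₀)) x t • (pdx Γ) x t))) + ((((pdx r₀) x t • (pdx (pdx Γ)) x t) + ((pdx (pdx r₀)) x t • (pdx Γ) x t)) + (((pdx (pdx r₀)) x t • (pdx Γ) x t) + ((pdx (pdx (pdx r₀))) x t • Γ x t)))) + ((((r₁ x t • (pdx (pdx (pdx (pdx Γ)))) x t) + ((pdx r₁) x t • (pdx (pdx (pdx Γ))) x t)) + (((pdx r₁) x t • (pdx (pdx (pdx Γ))) x t) + ((pdx (pdx r₁)) x t • (pdx (pdx Γ)) x t))) + ((((pdx r₁) x t • (pdx (pdx (pdx Γ))) x t) + ((pdx (pdx r₁)) x t • (pdx (pdx Γ)) x t)) + (((pdx (pdx r₁)) x t • (pdx (pdx Γ)) x t) + ((pdx (pdx (pdx r₁))) x t • (pdx Γ) x t))))) + ((((r₂ x t • (pdx (pdx (pdx (pdx (pdx Γ)))))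 x t) + ((pdx r₂) x t • (pdx (pdx (pdx (pdx Γ)))) x t)) + (((pdx r₂) x t • (pdx (pdx (pdx (pdx Γ)))) x t) + ((pdx (pdx r₂)) x t • (pdx (pdx (pdx Γ))) x t))) + ((((pdx r₂) x t • (pdx (pdx (pdx (pdx Γ)))) x t) + ((pdx (pdx r₂)) x t • (pdx (pdx (pdx Γ))) x t)) + (((pdx (pdx r₂)) x t • (pdx (pdx (pdx Γ))) x t) + ((pdx (pdx (pdx r₂))) x t • (pdx (pdx Γ)) x t))))) := by
    intro x t
    have hfun : (fun x' => (pdx (pdx (pdt Γ))) x' t) = fun x' => (((((r₀ x' t • (pdx (pdx Γ)) x' t) + ((pdx r₀) x' t • (pdx Γ) x' t)) + (((pdx r₀) x' t • (pdx Γ) x' t) + ((pdx (pdx r₀)) x' t • Γ x' t))) + (((r₁ x' t • (pdx (pdx (pdx Γ))) x' t) + ((pdx r₁) x' t • (pdx (pdx Γ)) x' t)) + (((pdx r₁) x' t • (pdx (pdx Γ)) x' t) + ((pdx (pdx r₁)) x' t • (pdx Γ) x' t)))) + (((r₂ x' t • (pdx (pdx (pdx (pdx Γ)))) x' t) + ((pdx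 r₂) x' t • (pdx (pdx (pdx Γ))) x' t)) + (((pdx r₂) x' t • (pdx (pdx (pdx Γ))) x' t) + ((pdx (pdx r₂)) x' t • (pdx (pdx Γ)) x' t)))) := funext fun x' => hX2 x' t
    have hd : HasDerivAt (fun x' => (pdx (pdx (pdt Γ))) x' t) (((((((r₀ x t • (pdx (pdx (pdx Γ))) x t) + ((pdx r₀) x t • (pdx (pdx Γ)) x t)) + (((pdx r₀) x t • (pdx (pdx Γ)) x t) + ((pdx (pdx r₀)) x t • (pdx Γ) x t))) + ((((pdx r₀) x t • (pdx (pdx Γ)) x t) + ((pdx (pdx r₀)) x t • (pdx Γ) x t)) + (((pdx (pdx r₀)) x t • (pdx Γ) x t) + ((pdx (pdx (pdx r₀))) x t • Γ x t)))) + ((((r₁ x t • (pdx (pdx (pdx (pdx Γ)))) x t) + ((pdx r₁) x t • (pdx (pdx (pdx Γ))) x t)) + (((pdx r₁) x t • (pdx (pdx (pdx Γ))) x t) + ((pdx (pdx r₁)) x t • (pdx (pdx Γ)) x t))) + ((((pdx r₁) x t • (pdx (pdx (pdx Γ))) x t) + ((pdx (pdx r₁)) x t • (pdx (pdx Γ))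 x t)) + (((pdx (pdx r₁)) x t • (pdx (pdx Γ)) x t) + ((pdx (pdx (pdx r₁))) x t • (pdx Γ) x t))))) + ((((r₂ x t • (pdx (pdx (pdx (pdx (pdx Γ))))) x t) + ((pdx r₂) x t • (pdx (pdx (pdx (pdx Γ)))) x t)) + (((pdx r₂) x t • (pdx (pdx (pdx (pdx Γ)))) x t) + ((pdx (pdx r₂)) x t • (pdx (pdx (pdx Γ))) x t))) + ((((pdx r₂) x t • (pdx (pdx (pdx (pdx Γ)))) x t) + ((pdx (pdx r₂)) x t • (pdx (pdx (pdx Γ))) x t)) + (((pdx (pdx r₂)) x t • (pdx (pdx (pdx Γ))) x t) + ((pdx (pdx (pdx r₂))) x t • (pdx (pdx Γ)) x t)))))) x := by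
      rw [hfun]
      exact ((((((hasDerivAt_pdx r₀ sr0_0 x t).smul (hasDerivAt_pdx (pdx (pdx Γ)) sG2 x t)).add ((hasDerivAt_pdx (pdx r₀) sr0_1 x t).smul (hasDerivAt_pdx (pdx Γ) sG1 x t))).add (((hasDerivAt_pdx (pdx r₀) sr0_1 x t).smul (hasDerivAt_pdx (pdx Γ) sG1 x t)).add ((hasDerivAt_pdx (pdx (pdx r₀)) sr0_2 x t).smul (hasDerivAt_pdx Γ hΓ x t)))).add ((((hasDerivAt_pdx r₁ hr₁ x t).smul (hasDerivAt_pdx (pdx (pdx (pdx Γ))) sG3 x t)).add ((hasDerivAt_pdx (pdx r₁) sr1_1 x t).smul (hasDerivAt_pdx (pdx (pdx Γ)) sG2 x t))).add (((hasDerivAt_pdx (pdx r₁) sr1_1 x t).smul (hasDerivAt_pdx (pdx (pdx Γ)) sG2 x t)).add ((hasDerivAt_pdx (pdx (pdx r₁)) sr1_2 x t).smul (hasDerivAt_pdx (pdx Γ) sG1 x t))))).add ((((hasDerivAt_pdx r₂ hr₂ x t).smul (hasDerivAt_pdx (pdx (pdx (pdx (pdx Γ)))) sG4 x t)).add ((hasDerivAt_pdx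 (pdx r₂) sr2_1 x t).smul (hasDerivAt_pdx (pdx (pdx (pdx Γ))) sG3 x t))).add (((hasDerivAt_pdx (pdx r₂) sr2_1 x t).smul (hasDerivAt_pdx (pdx (pdx (pdx Γ))) sG3 x t)).add ((hasDerivAt_pdx (pdx (pdx r₂)) sr2_2 x t).smul (hasDerivAt_pdx (pdx (pdx Γ)) sG2 x t)))))
    exact hd.deriv
  have hPt0 : ∀ x t, pdt p₀ x t = det3 (pdt (pdx (pdx (pdx Γ))) x t) (pdx Γ x t) (pdx (pdx Γ) x t) + det3 (pdx (pdx (pdx Γ)) x t) (pdt (pdx Γ) x t) (pdx (pdx Γ) x t) + det3 (pdx (pdx (pdx Γ)) x t) (pdx Γ x t) (pdt (pdx (pdx Γ)) x t) := by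
    intro x t
    have hfun : (fun t' => p₀ x t') = fun t' => det3 (pdx (pdx (pdx Γ)) x t') (pdx Γ x t') (pdx (pdx Γ) x t') := funext fun t' => hp₀ x t'
    have hd : HasDerivAt (fun t' => p₀ x t') (det3 (pdt (pdx (pdx (pdx Γ))) x t) (pdx Γ x t) (pdx (pdx Γ) x t) + det3 (pdx (pdx (pdx Γ)) x t) (pdt (pdx Γ) x t) (pdx (pdx Γ) x t) + det3 (pdx (pdx (pdx Γ)) x t) (pdx Γ x t) (pdt (pdx (pdx Γ)) x t)) t := by
      rw [hfun]
      exact hasDerivAt_det3 (hasDerivAt_pdt (pdx (pdx (pdx Γ))) sG3 x t) (hasDerivAt_pdt (pdx Γ) sG1 x t) (hasDerivAt_pdt (pdx (pdx Γ)) sG2 x t)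
    exact hd.deriv
  have hPt1 : ∀ x t, pdt p₁ x t = det3 (pdt Γ x t) (pdx (pdx (pdx Γ)) x t) (pdx (pdx Γ) x t) + det3 (Γ x t) (pdt (pdx (pdx (pdx Γ))) x t) (pdx (pdx Γ) x t) + det3 (Γ x t) (pdx (pdx (pdx Γ)) x t) (pdt (pdx (pdx Γ)) x t) := by
    intro x t
    have hfun : (fun t' => p₁ x t') = fun t' => det3 (Γ x t') (pdx (pdx (pdx Γ)) x t') (pdx (pdx Γ) x t') := funext fun t' => hp₁ x t'
    have hd : HasDerivAt (fun t' => p₁ x t') (det3 (pdt Γ x t) (pdx (pdx (pdx Γ)) x t) (pdx (pdx Γ) x t) + det3 (Γ x t) (pdt (pdx (pdx (pdx Γ))) x t) (pdx (pdx Γ) x t) + det3 (Γ x t) (pdx (pdx (pdx Γ)) x t) (pdt (pdx (pdx Γ)) x t)) t := by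
      rw [hfun]
      exact hasDerivAt_det3 (hasDerivAt_pdt Γ hΓ x t) (hasDerivAt_pdt (pdx (pdx (pdx Γ))) sG3 x t) (hasDerivAt_pdt (pdx (pdx Γ)) sG2 x t)
    exact hd.deriv
  have hcomp : ∀ x t, pdx (fun x t => (3 * p₀ x t - 2 * pdx p₁ x t) * pdx r₂ x t) x t = (((((3) * (pdx p₀) x t) - ((2) * (pdx (pdx p₁)) x t)) * (pdx r₂) x t) + ((((3) * p₀ x t) - ((2) * (pdx p₁) x t)) * (pdx (pdx r₂)) x t)) := by
    intro x t
    have hd : HasDerivAt (fun x' => (3 * p₀ x' t - 2 * pdx p₁ x' t) * pdx r₂ x' t) ((((((3) * (pdx p₀) x t) - ((2) * (pdx (pdx p₁)) x t)) * (pdx r₂) x t) + ((((3) * p₀ x t) - ((2) * (pdx p₁) x t)) * (pdx (pdx r₂)) x t))) x := ((((hasDerivAt_pdx p₀ sp0_0 x t).const_mul (3)).sub ((hasDerivAt_pdx (pdx p₁) sp1_1 x t).const_mul (2))).mul (hasDerivAt_pdx (pdx r₂) sr2_1 x t))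
    exact hd.deriv
  constructor
  · intro x t
    have hD := harc x t
    rw [det3_expand] at hD
    rw [hPt0 x t, congrFun (congrFun hS3 x) t, congrFun (congrFun hS2 x) t, congrFun (congrFun hS1 x) t]
    rw [hX3 x t, hX2 x t, hX1 x t]
    rw [hF2 x t, hF1 x t, hF0 x t]
    rw [hr0d3 x t, hr0d2 x t, hr0d1 x t, hr₀ x t]
    rw [hcomp x t]
    simp only [det3_expand, Pi.add_apply, Pi.sub_apply, Pi.neg_apply, Pi.smul_apply, smul_eq_mul]
    linear_combination ((-pdx (pdx (pdx (pdx r₁))) x t + p₁ x t * pdx (pdx r₁) x t + 3 * p₀ x t * pdx r₁ x t + pdx p₀ x t * r₁ x t - (1/3) * (pdx (pdx (pdx (pdx (pdx r₂)))) x t + p₁ x t * pdx (pdx (pdx r₂)) x t) + (((((3) * (pdx p₀) x t) - ((2) * (pdx (pdx p₁)) x t)) * (pdx r₂) x t) + ((((3) * p₀ x t) - ((2) * (pdx p₁) x t)) * (pdx (pdx r₂)) x t)) + (2/3) * ((p₁ x t)^2 * pdx r₂ x t + (p₁ x t * pdx p₁ x t - pdx (pdx (pdx p₁)) x t) * r₂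 x t) + pdx (pdx p₀) x t * r₂ x t)) * hD
  · intro x t
    have hD := harc x t
    rw [det3_expand] at hD
    rw [hPt1 x t, congrFun (congrFun hS3 x) t, congrFun (congrFun hS2 x) t]
    rw [hX3 x t, hX2 x t, hflow x t]
    rw [hF2 x t, hF1 x t, hF0 x t]
    rw [hr0d3 x t, hr0d2 x t, hr0d1 x t, hr₀ x t]
    simp only [det3_expand, Pi.add_apply, Pi.sub_apply, Pi.neg_apply, Pi.smul_apply, smul_eq_mul]
    linear_combination ((-2 * pdx (pdx (pdx r₁)) x t + 2 * p₁ x t * pdx r₁ x t + pdx p₁ x t * r₁ x t - pdx (pdx (pdx (pdx r₂))) x t + p₁ x t * pdx (pdx r₂) x t + (3 * p₀ x t - pdx p₁ x t) * pdx r₂ x t + (2 * pdx p₀ x t - pdx (pdx p₁) x t) * r₂ x t)) * hD
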